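/- Let d ≥ 1, k ∈ ℕ, j ∈ {1,…,d}, h ≥ 0, and let E ⊆ (0,∞) be measurable. Define 𝔘(z,t) = (t^{k+1}/(2√π)) ∫_E ∂_t^k( t e^{−t²/(4(u+h))} ) ∂_{z_j} W_u(z) (u+h)^{−3/2} du for z ∈ ℝ^d and t > 0. Then there exists C > 0 (depending only on d, k, h, E) such that for every measurable φ : ℝ^d × ℝ^d → [0,1] with φ(x,y) = 0 whenever (x,y) ∉ L₂, and every f ∈ C_c^∞(ℝ^d), one has sup_{t>0} | ∫_{ℝ^d} 𝔘(x−y,t) φ(x,y) f(y) dy | ≤ C sup_{v>0} (W_v * |f|)(x) for all x ∈ ℝ^d. -/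

import Mathlib

open MeasureTheory Matrix
open scoped ENNReal

noncomputable section

/-- The squared Euclidean norm `|x|²` on `ℝ^d`. -/
def nrm2 {d : ℕ} (x : Fin d → ℝ) : ℝ := ∑ i, x i ^ 2

/-- The Euclidean norm `|x|` on `ℝ^d`. -/
def nrm {d : ℕ} (x : Fin d → ℝ) : ℝ := Real.sqrt (nrm2 x)

/-- The local region
`L_σ = {(x,y) : |x-y| ≤ σ min(1, |x+y|⁻¹)}`, written equivalently as
`|x-y| ≤ σ` and `|x-y|·|x+y| ≤ σ`. -/
def localRegion (d : ℕ) (σ : ℝ) : Set ((Fin d → ℝ) × (Fin d → ℝ)) :=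
  {p | nrm (p.1 - p.2) ≤ σ ∧ nrm (p.1 - p.2) * nrm (p.1 + p.2) ≤ σ}

/-- The global region `G_σ = (ℝ^d × ℝ^d) \ L_σ`. -/
def globalRegion (d : ℕ) (σ : ℝ) : Set ((Fin d → ℝ) × (Fin d → ℝ)) :=
  (localRegion d σ)ᶜ

/-- The classical heat kernel `W_u(z) = (2πu)^{-d/2} e^{-|z|²/(2u)}`. -/
def heatKer (d : ℕ) (u : ℝ) (z : Fin d → ℝ) : ℝ :=
  (2 * Real.pi * u) ^ (-(d : ℝ)/2) * Real.exp (-(nrm2 z)/(2*u))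

/-- The kernel
`𝔘(z,t) = (t^{k+1}/(2√π)) ∫_E ∂_t^k(t e^{-t²/(4(u+h))}) ∂_{z_j} W_u(z) (u+h)^{-3/2} du`. -/
def Ufrak (d k : ℕ) (j : Fin d) (E : Set ℝ) (h : ℝ) (z : Fin d → ℝ) (t : ℝ) : ℝ :=
  (t ^ (k+1) / (2 * Real.sqrt Real.pi)) *
    ∫ u in E, iteratedDeriv k (fun r => r * Real.exp (-(r^2)/(4*(u+h)))) t *
      fderiv ℝ (fun w => heatKer d u w) z (Pi.single j 1) * (u + h) ^ (-(3:ℝ)/2)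


section Aux
open Polynomial

lemma pow_le_fact_exp (x : ℝ) (hx : 0 ≤ x) (n : ℕ) : x ^ n ≤ n.factorial * Real.exp x := by
  have h := Real.sum_le_exp_of_nonneg hx (n+1)
  have h2 : x ^ n / n.factorial ≤ ∑ i ∈ Finset.range (n+1), x ^ i / i.factorial := by
    exact Finset.single_le_sum (f := fun i => x ^ i / (i.factorial:ℝ))
      (fun i _ => by positivity) (Finset.self_mem_range_succ n)
  have h3 : x ^ n / n.factorial ≤ Real.exp x := h2.trans h
  have hn : (0:ℝ) < n.factorial := by positivity
  calc x ^ n = (x ^ n / n.factorial) * n.factorial := by field_simp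
    _ ≤ Real.exp x * n.factorial := by apply mul_le_mul_of_nonneg_right h3 hn.le
    _ = n.factorial * Real.exp x := mul_comm _ _

/-- s^n e^{-s²/8} ≤ 8^n n! + 1 for s ≥ 0 -/
lemma pow_mul_exp_neg_sq_le (n : ℕ) {s : ℝ} (hs : 0 ≤ s) :
    s ^ n * Real.exp (-(s^2)/8) ≤ 8 ^ n * n.factorial + 1 := by
  have hexp : Real.exp (-(s^2)/8) ≤ 1 := by
    apply Real.exp_le_one_iff.2; nlinarith [sq_nonneg s]
  rcases le_total s 1 with h1 | h1
  · have : s ^ n ≤ 1 := pow_le_one₀ hs h1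
    nlinarith [Real.exp_pos (-(s^2)/8), pow_pos (by norm_num : (0:ℝ)<8) n,
      Nat.one_le_iff_ne_zero.2 (Nat.factorial_ne_zero n)]
  · have h2 : s ^ n ≤ (s^2) ^ n := by
      apply pow_le_pow_left₀ hs; nlinarith
    have h3 : (s^2/8) ^ n ≤ n.factorial * Real.exp (s^2/8) := pow_le_fact_exp _ (by positivity) n
    have h4 : (s^2) ^ n ≤ 8^n * n.factorial * Real.exp (s^2/8) := by
      have : (s^2) ^ n = 8^n * (s^2/8)^n := by rw [← mul_pow]; ring_nf
      rw [this]
      calc (8:ℝ)^n * (s^2/8)^n ≤ 8^n * (n.factorial * Real.exp (s^2/8)) := by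
            apply mul_le_mul_of_nonneg_left h3 (by positivity)
        _ = 8^n * n.factorial * Real.exp (s^2/8) := by ring
    have h5 : s ^ n * Real.exp (-(s^2)/8) ≤ 8^n * n.factorial * (Real.exp (s^2/8) * Real.exp (-(s^2)/8)) := by
      have := Real.exp_pos (-(s^2)/8)
      nlinarith [h2.trans h4]
    rw [← Real.exp_add] at h5
    have : s^2/8 + -(s^2)/8 = 0 := by ring
    rw [this, Real.exp_zero, mul_one] at h5
    linarith

/-- For any polynomial, |P(s)| e^{-s²/8} is bounded on s ≥ 0. -/
lemma poly_exp_bound (P : Polynomial ℝ) : ∃ C > 0, ∀ s : ℝ, 0 ≤ s →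
    |P.eval s| * Real.exp (-(s^2)/8) ≤ C := by
  refine ⟨(∑ j ∈ Finset.range (P.natDegree + 1), |P.coeff j| * (8^j * j.factorial + 1)) + 1,
    by positivity, fun s hs => ?_⟩
  have he : P.eval s = ∑ j ∈ Finset.range (P.natDegree + 1), P.coeff j * s ^ j := by
    rw [eval_eq_sum_range]
  have h1 : |P.eval s| ≤ ∑ j ∈ Finset.range (P.natDegree + 1), |P.coeff j| * s ^ j := by
    rw [he]
    refine (Finset.abs_sum_le_sum_abs _ _).trans (le_of_eq ?_)
    refine Finset.sum_congr rfl fun j _ => ?_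
    rw [abs_mul, abs_of_nonneg (pow_nonneg hs j)]
  have hexp : 0 ≤ Real.exp (-(s^2)/8) := (Real.exp_pos _).le
  calc |P.eval s| * Real.exp (-(s^2)/8)
      ≤ (∑ j ∈ Finset.range (P.natDegree + 1), |P.coeff j| * s ^ j) * Real.exp (-(s^2)/8) :=
        mul_le_mul_of_nonneg_right h1 hexp
    _ = ∑ j ∈ Finset.range (P.natDegree + 1), |P.coeff j| * (s ^ j * Real.exp (-(s^2)/8)) := by
        rw [Finset.sum_mul]; exact Finset.sum_congr rfl fun j _ => by ring
    _ ≤ ∑ j ∈ Finset.range (P.natDegree + 1), |P.coeff j| * (8^j * j.factorial + 1) := by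
        refine Finset.sum_le_sum fun j _ => ?_
        exact mul_le_mul_of_nonneg_left (pow_mul_exp_neg_sq_le j hs) (abs_nonneg _)
    _ ≤ _ := by linarith

noncomputable def Qp : ℕ → Polynomial ℝ
  | 0 => X
  | (k+1) => derivative (Qp k) - Polynomial.C (1/2) * (X * Qp k)

lemma iteratedDeriv_closed_form {a : ℝ} (ha : 0 < a) (k : ℕ) :
    iteratedDeriv k (fun r : ℝ => r * Real.exp (-(r^2)/(4*a))) =
      fun t : ℝ => Real.sqrt a ^ ((1:ℤ) - k) * (Qp k).eval (t / Real.sqrt a) *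
        Real.exp (-(t^2)/(4*a)) := by
  set b := Real.sqrt a with hbdef
  have hb : 0 < b := Real.sqrt_pos.2 ha
  have hb2 : b ^ 2 = a := Real.sq_sqrt ha.le
  induction k with
  | zero =>
      funext t
      simp only [iteratedDeriv_zero, Qp, eval_X]
      rw [zpow_sub₀ hb.ne', zpow_one, zpow_natCast, pow_zero]
      field_simp
  | succ k ih =>
      funext t
      rw [iteratedDeriv_succ, ih]
      have hder : HasDerivAt (fun t : ℝ => b ^ ((1:ℤ) - k) * (Qp k).eval (t / b) *
            Real.exp (-(t^2)/(4*a)))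
          (b ^ ((1:ℤ) - (k+1:ℕ)) * (Qp (k+1)).eval (t / b) * Real.exp (-(t^2)/(4*a))) t := by
        have h1 : HasDerivAt (fun t : ℝ => (Qp k).eval (t / b))
            ((derivative (Qp k)).eval (t / b) * (1 / b)) t := by
          have := (Polynomial.hasDerivAt (Qp k) (t / b)).comp t
            ((hasDerivAt_id t).div_const b)
          simpa [Function.comp_def] using this
        have h2 : HasDerivAt (fun t : ℝ => Real.exp (-(t^2)/(4*a)))
            (Real.exp (-(t^2)/(4*a)) * (-(2*t)/(4*a))) t := by
          have hinner : HasDerivAt (fun t : ℝ => -(t^2)/(4*a)) (-(2*t)/(4*a)) t := by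
            have : HasDerivAt (fun t : ℝ => -(t^2)) (-(2*t)) t := by
              simpa using ((hasDerivAt_pow 2 t).fun_neg)
            simpa using this.div_const (4*a)
          simpa [mul_comm] using hinner.exp
        have h3 := ((h1.const_mul (b ^ ((1:ℤ) - k))).mul h2)
        refine h3.congr_deriv ?_
        have hQ : (Qp (k+1)).eval (t/b) =
            (derivative (Qp k)).eval (t/b) - (1/2) * ((t/b) * (Qp k).eval (t/b)) := by
          simp [Qp]
        rw [hQ]
        have hzp : b ^ ((1:ℤ) - (k+1:ℕ)) = b ^ ((1:ℤ) - k) * b⁻¹ := by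
          rw [← _root_.zpow_neg_one, ← zpow_add₀ hb.ne']
          congr 1
          push_cast
          ring
        rw [hzp]
        have ht : -(2*t)/(4*a) = -(t/b) * (1/2) * b⁻¹ := by
          rw [← hb2]
          field_simp
          ring
        rw [ht]
        ring
      rw [hder.deriv]

lemma timeDeriv_bound (k : ℕ) : ∃ C > 0, ∀ a : ℝ, 0 < a → ∀ t : ℝ, 0 < t →
    t^(k+1) * |iteratedDeriv k (fun r : ℝ => r * Real.exp (-(r^2)/(4*a))) t| ≤
      C * (Real.sqrt a * t * Real.exp (-(t^2)/(8*a))) := by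
  obtain ⟨C, hC, hCb⟩ := poly_exp_bound (X^k * Qp k)
  refine ⟨C, hC, fun a ha t ht => ?_⟩
  set b := Real.sqrt a with hbdef
  have hb : 0 < b := Real.sqrt_pos.2 ha
  have hb2 : b ^ 2 = a := Real.sq_sqrt ha.le
  rw [iteratedDeriv_closed_form ha]
  set s := t / b with hsdef
  have hs : 0 < s := div_pos ht hb
  have hts : t = s * b := by rw [hsdef, div_mul_cancel₀ _ hb.ne']
  have hexp : Real.exp (-(t^2)/(4*a)) = Real.exp (-(s^2)/8) * Real.exp (-(t^2)/(8*a)) := by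
    rw [← Real.exp_add]
    congr 1
    have hs2 : s^2 = t^2 / a := by
      rw [hsdef, div_pow, hb2]
    rw [hs2]
    field_simp
    ring
  have habs : |b ^ ((1:ℤ) - k) * (Qp k).eval s * Real.exp (-(t^2)/(4*a))|
      = b ^ ((1:ℤ) - k) * |(Qp k).eval s| * Real.exp (-(t^2)/(4*a)) := by
    rw [abs_mul, abs_mul, abs_of_pos (zpow_pos hb _), abs_of_pos (Real.exp_pos _)]
  rw [habs]
  have hpow : t^(k+1) * b ^ ((1:ℤ) - k) = s^(k+1) * b^2 := by
    rw [hts, mul_pow, mul_assoc]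
    congr 1
    rw [← zpow_natCast b (k+1), ← zpow_add₀ hb.ne']
    have : ((k+1:ℕ):ℤ) + ((1:ℤ) - k) = 2 := by push_cast; ring
    rw [this, zpow_two, sq]
  have key := hCb s hs.le
  have hevalX : |eval s (X^k * Qp k)| = s^k * |(Qp k).eval s| := by
    rw [eval_mul, eval_pow, eval_X, abs_mul, abs_pow, abs_of_nonneg hs.le]
  rw [hevalX] at key
  calc t^(k+1) * (b ^ ((1:ℤ) - k) * |(Qp k).eval s| * Real.exp (-(t^2)/(4*a)))
      = (s^k * |(Qp k).eval s| * Real.exp (-(s^2)/8)) * (b^2 * s * Real.exp (-(t^2)/(8*a))) := by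
        rw [hexp]
        have : t^(k+1) * (b ^ ((1:ℤ) - k) * |(Qp k).eval s| *
            (Real.exp (-(s^2)/8) * Real.exp (-(t^2)/(8*a))))
            = (t^(k+1) * b ^ ((1:ℤ) - k)) * (|(Qp k).eval s| *
              (Real.exp (-(s^2)/8) * Real.exp (-(t^2)/(8*a)))) := by ring
        rw [this, hpow]
        ring
    _ ≤ C * (b^2 * s * Real.exp (-(t^2)/(8*a))) := by
        apply mul_le_mul_of_nonneg_right key
        positivity
    _ = C * (b * t * Real.exp (-(t^2)/(8*a))) := by
        rw [hts]
        ring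

lemma nrm2_hasFDerivAt {d : ℕ} (z : Fin d → ℝ) :
    HasFDerivAt (fun w : Fin d → ℝ => nrm2 w)
      (∑ i, (2 * z i) • (ContinuousLinearMap.proj i : (Fin d → ℝ) →L[ℝ] ℝ)) z := by
  have h : ∀ i ∈ Finset.univ, HasFDerivAt (fun w : Fin d → ℝ => w i ^ 2)
      ((2 * z i) • (ContinuousLinearMap.proj i : (Fin d → ℝ) →L[ℝ] ℝ)) z := by
    intro i _
    have hp : HasFDerivAt (fun w : Fin d → ℝ => w i)
        (ContinuousLinearMap.proj i : (Fin d → ℝ) →L[ℝ] ℝ) z :=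
      (ContinuousLinearMap.proj i : (Fin d → ℝ) →L[ℝ] ℝ).hasFDerivAt
    have := hp.fun_mul hp
    have heq : (fun w : Fin d → ℝ => w i * w i) = fun w : Fin d → ℝ => w i ^ 2 := by
      funext w; ring
    rw [heq] at this
    refine this.congr_fderiv ?_
    rw [two_mul, add_smul]
  have := HasFDerivAt.fun_sum h
  simpa [nrm2] using this

lemma fderiv_heatKer_single (d : ℕ) {u : ℝ} (hu : 0 < u) (z : Fin d → ℝ) (j : Fin d) :
    fderiv ℝ (fun w => heatKer d u w) z (Pi.single j 1) = -(z j / u) * heatKer d u z := by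
  have hfun : (fun w : Fin d → ℝ => heatKer d u w) =
      fun w => (2 * Real.pi * u) ^ (-(d : ℝ)/2) * Real.exp ((-(2*u)⁻¹) * nrm2 w) := by
    funext w
    unfold heatKer
    congr 1
    ring
  set L := (∑ i, (2 * z i) • (ContinuousLinearMap.proj i : (Fin d → ℝ) →L[ℝ] ℝ)) with hL
  have h1 : HasFDerivAt (fun w : Fin d → ℝ => (-(2*u)⁻¹) * nrm2 w)
      ((-(2*u)⁻¹) • L) z := (nrm2_hasFDerivAt z).const_mul _
  have h2 := h1.exp
  have h3 := h2.const_mul ((2 * Real.pi * u) ^ (-(d : ℝ)/2))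
  rw [hfun]
  rw [h3.fderiv]
  have hLval : L (Pi.single j 1) = 2 * z j := by
    rw [hL]
    simp only [ContinuousLinearMap.coe_sum', Finset.sum_apply,
      ContinuousLinearMap.coe_smul', Pi.smul_apply, ContinuousLinearMap.proj_apply]
    rw [Finset.sum_eq_single j]
    · simp
    · intro i _ hij
      simp [Pi.single_apply, hij]
    · simp
  simp only [ContinuousLinearMap.coe_smul', Pi.smul_apply, smul_eq_mul]
  rw [hLval]
  unfold heatKer
  have harg : (-(2*u)⁻¹) * nrm2 z = -(nrm2 z)/(2*u) := by ring
  rw [harg]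
  field_simp



lemma r_exp_le {u : ℝ} (hu : 0 < u) {r : ℝ} (hr : 0 ≤ r) :
    r * Real.exp (-(r^2)/(4*u)) ≤ 2 * Real.sqrt u := by
  have hsu : 0 < Real.sqrt u := Real.sqrt_pos.2 hu
  have husq : Real.sqrt u * Real.sqrt u = u := Real.mul_self_sqrt hu.le
  rcases le_total r (2 * Real.sqrt u) with h | h
  · have hexp : Real.exp (-(r^2)/(4*u)) ≤ 1 := by
      apply Real.exp_le_one_iff.2
      apply div_nonpos_of_nonpos_of_nonneg (neg_nonpos_of_nonneg (sq_nonneg r)) (by positivity)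
    nlinarith [Real.exp_pos (-(r^2)/(4*u))]
  · have hr0 : 0 < r := lt_of_lt_of_le (by positivity) h
    have h1 : r^2/(4*u) ≤ Real.exp (r^2/(4*u)) := by
      have := Real.add_one_le_exp (r^2/(4*u))
      linarith
    have h2 : Real.exp (-(r^2)/(4*u)) ≤ 4*u/r^2 := by
      rw [show -(r^2)/(4*u) = -(r^2/(4*u)) by ring, Real.exp_neg]
      have hpos : 0 < r^2/(4*u) := by positivity
      calc (Real.exp (r^2/(4*u)))⁻¹ ≤ (r^2/(4*u))⁻¹ := by
            apply inv_anti₀ hpos h1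
        _ = 4*u/r^2 := by rw [inv_div]
    calc r * Real.exp (-(r^2)/(4*u)) ≤ r * (4*u/r^2) :=
          mul_le_mul_of_nonneg_left h2 hr
      _ = 4*u/r := by field_simp
      _ ≤ 4*u/(2*Real.sqrt u) := by
          apply div_le_div_of_nonneg_left (by positivity) (by positivity) h
      _ = 2*Real.sqrt u := by
          rw [div_eq_iff (by positivity)]
          nlinarith [husq]

lemma fderiv_heatKer_bound (d : ℕ) {u : ℝ} (hu : 0 < u) (z : Fin d → ℝ) (j : Fin d) :
    |fderiv ℝ (fun w => heatKer d u w) z (Pi.single j 1)| ≤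
      2 * 2 ^ ((d:ℝ)/2) * u ^ (-(1:ℝ)/2) * heatKer d (2*u) z := by
  rw [fderiv_heatKer_single d hu z j]
  have hq0 : 0 ≤ nrm2 z := Finset.sum_nonneg (fun i _ => sq_nonneg _)
  set q := nrm2 z with hq
  have hzj : |z j| ≤ Real.sqrt q := by
    have h1 : z j ^ 2 ≤ q := Finset.single_le_sum
      (f := fun i => z i ^ 2) (fun i _ => sq_nonneg _) (Finset.mem_univ j)
    calc |z j| = Real.sqrt (z j ^ 2) := (Real.sqrt_sq_eq_abs _).symm
      _ ≤ Real.sqrt q := Real.sqrt_le_sqrt h1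
  have hkey : Real.sqrt q * Real.exp (-q/(4*u)) ≤ 2 * Real.sqrt u := by
    have := r_exp_le hu (Real.sqrt_nonneg q)
    rwa [Real.sq_sqrt hq0] at this
  have hW2 : heatKer d (2*u) z =
      2 ^ (-(d:ℝ)/2) * (2*Real.pi*u) ^ (-(d:ℝ)/2) * Real.exp (-q/(4*u)) := by
    unfold heatKer
    rw [show 2*Real.pi*(2*u) = 2*(2*Real.pi*u) by ring,
      Real.mul_rpow (by norm_num) (by positivity),
      show (2:ℝ)*(2*u) = 4*u by ring]
  have hc : (0:ℝ) < (2*Real.pi*u) ^ (-(d:ℝ)/2) := Real.rpow_pos_of_pos (by positivity) _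
  have hees : Real.exp (-q/(2*u)) = Real.exp (-q/(4*u)) * Real.exp (-q/(4*u)) := by
    rw [← Real.exp_add]; congr 1; field_simp; ring
  have hru : Real.sqrt u * u ^ (-(1:ℝ)/2) = 1 := by
    rw [Real.sqrt_eq_rpow, ← Real.rpow_add hu]
    norm_num
  have h2d : (2:ℝ) ^ ((d:ℝ)/2) * 2 ^ (-(d:ℝ)/2) = 1 := by
    rw [← Real.rpow_add (by norm_num : (0:ℝ) < 2),
      show (d:ℝ)/2 + -(d:ℝ)/2 = 0 by ring, Real.rpow_zero]
  have habs : |(-(z j / u)) * heatKer d u z| = (|z j|/u) * heatKer d u z := by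
    have hW : 0 < heatKer d u z := by
      unfold heatKer
      positivity
    rw [abs_mul, abs_neg, abs_div, abs_of_pos hu, abs_of_pos hW]
  rw [habs, hW2]
  rw [show heatKer d u z = (2*Real.pi*u) ^ (-(d:ℝ)/2) * Real.exp (-q/(2*u)) from rfl]
  rw [hees]
  have step1 : |z j| / u * ((2*Real.pi*u) ^ (-(d:ℝ)/2) *
        (Real.exp (-q/(4*u)) * Real.exp (-q/(4*u))))
      ≤ (Real.sqrt q * Real.exp (-q/(4*u))) * ((2*Real.pi*u) ^ (-(d:ℝ)/2) *
        Real.exp (-q/(4*u)) / u) := by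
    have hrw : |z j| / u * ((2*Real.pi*u) ^ (-(d:ℝ)/2) *
        (Real.exp (-q/(4*u)) * Real.exp (-q/(4*u))))
        = (|z j| * Real.exp (-q/(4*u))) * ((2*Real.pi*u) ^ (-(d:ℝ)/2) *
          Real.exp (-q/(4*u)) / u) := by ring
    rw [hrw]
    apply mul_le_mul_of_nonneg_right
    · exact mul_le_mul_of_nonneg_right hzj (Real.exp_pos _).le
    · positivity
  refine step1.trans ?_
  have step2 : (Real.sqrt q * Real.exp (-q/(4*u))) * ((2*Real.pi*u) ^ (-(d:ℝ)/2) *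
        Real.exp (-q/(4*u)) / u)
      ≤ (2 * Real.sqrt u) * ((2*Real.pi*u) ^ (-(d:ℝ)/2) * Real.exp (-q/(4*u)) / u) := by
    apply mul_le_mul_of_nonneg_right hkey
    positivity
  refine step2.trans (le_of_eq ?_)
  have hsu : 0 < Real.sqrt u := Real.sqrt_pos.2 hu
  have husqq : Real.sqrt u * Real.sqrt u = u := Real.mul_self_sqrt hu.le
  have hAu : u ^ (-(1:ℝ)/2) = 1 / Real.sqrt u := by
    rw [eq_div_iff hsu.ne']
    rw [mul_comm] at hru
    linarith [hru]
  rw [hAu]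
  set X := (2*Real.pi*u) ^ (-(d:ℝ)/2) * Real.exp (-q/(4*u)) with hX
  have e1 : 2 * Real.sqrt u * (X/u) = 2*X/Real.sqrt u := by
    field_simp
    linear_combination ((2*Real.pi*u) ^ (-(d:ℝ)/2) * Real.exp (-q/(4*u))) * husqq
  have e2 : 2 * 2 ^ ((d:ℝ)/2) * (1/Real.sqrt u) * (2 ^ (-(d:ℝ)/2) * X)
      = 2*X/Real.sqrt u := by
    have : 2 * 2 ^ ((d:ℝ)/2) * (1/Real.sqrt u) * ((2:ℝ) ^ (-(d:ℝ)/2) * X)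
        = ((2:ℝ) ^ ((d:ℝ)/2) * 2 ^ (-(d:ℝ)/2)) * (2*X/Real.sqrt u) := by
      field_simp
    rw [this, h2d, one_mul]
  calc 2 * Real.sqrt u * ((2*Real.pi*u) ^ (-(d:ℝ)/2) * Real.exp (-q/(4*u)) / u)
      = 2 * Real.sqrt u * (X/u) := by rw [hX]
    _ = 2*X/Real.sqrt u := e1
    _ = 2 * 2 ^ ((d:ℝ)/2) * (1/Real.sqrt u) * (2 ^ (-(d:ℝ)/2) * X) := e2.symm
    _ = 2 * 2 ^ ((d:ℝ)/2) * (1/Real.sqrt u) *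
        (2 ^ (-(d:ℝ)/2) * (2*Real.pi*u) ^ (-(d:ℝ)/2) * Real.exp (-q/(4*u))) := by
          rw [hX]; ring


lemma exp_neg_le_inv {x : ℝ} (hx : 0 < x) : Real.exp (-x) ≤ x⁻¹ := by
  rw [Real.exp_neg]
  have h1 : x ≤ Real.exp x := by linarith [Real.add_one_le_exp x]
  exact inv_anti₀ hx h1

def wfun (h : ℝ) (u t : ℝ) : ℝ :=
  t * (u+h)⁻¹ * Real.exp (-(t^2)/(8*(u+h))) * u ^ (-(1:ℝ)/2)

lemma wfun_nonneg {h u t : ℝ} (hu : 0 ≤ u) (hh : 0 ≤ h) (ht : 0 ≤ t) : 0 ≤ wfun h u t := by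
  unfold wfun
  have : (0:ℝ) ≤ (u+h)⁻¹ := by positivity
  positivity

lemma wfun_measurable (h t : ℝ) : Measurable (fun u : ℝ => wfun h u t) := by
  unfold wfun
  fun_prop

lemma mass_bound (h : ℝ) (hh : 0 ≤ h) {t : ℝ} (ht : 0 < t) :
    ∫⁻ u in Set.Ioi (0:ℝ), ENNReal.ofReal (wfun h u t) ≤ ENNReal.ofReal 18 := by
  set c := t^2 with hcdef
  have hc : 0 < c := by positivity
  have hsqc : c ^ ((1:ℝ)/2) = t := by
    rw [← Real.sqrt_eq_rpow, hcdef, Real.sqrt_sq ht.le]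
  set g₁ : ℝ → ℝ≥0∞ := fun u => ENNReal.ofReal (8 * u ^ (-(1:ℝ)/2) / t) with hg₁
  set g₂ : ℝ → ℝ≥0∞ := fun u => ENNReal.ofReal (t * u ^ (-(3:ℝ)/2)) with hg₂
  have hg₁m : Measurable g₁ := by
    apply Measurable.ennreal_ofReal
    fun_prop
  have hg₂m : Measurable g₂ := by
    apply Measurable.ennreal_ofReal
    fun_prop
  have hpt : ∀ u ∈ Set.Ioi (0:ℝ), ENNReal.ofReal (wfun h u t) ≤
      (Set.Ioc 0 c).indicator g₁ u + (Set.Ioi c).indicator g₂ u := by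
    intro u hu
    have hu0 : 0 < u := hu
    have ha : 0 < u + h := by linarith
    rcases le_or_gt u c with hcase | hcase
    · have h1 : wfun h u t ≤ 8 * u ^ (-(1:ℝ)/2) / t := by
        unfold wfun
        have hexp : Real.exp (-(t^2)/(8*(u+h))) ≤ 8*(u+h)/t^2 := by
          have hx : 0 < t^2/(8*(u+h)) := by positivity
          have := exp_neg_le_inv hx
          rw [show -(t^2)/(8*(u+h)) = -(t^2/(8*(u+h))) by ring]
          rw [inv_div] at this
          exact this
        calc t * (u+h)⁻¹ * Real.exp (-(t^2)/(8*(u+h))) * u ^ (-(1:ℝ)/2)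
            ≤ t * (u+h)⁻¹ * (8*(u+h)/t^2) * u ^ (-(1:ℝ)/2) := by
              apply mul_le_mul_of_nonneg_right _ (by positivity)
              apply mul_le_mul_of_nonneg_left hexp (by positivity)
          _ = 8 * u ^ (-(1:ℝ)/2) / t := by
              field_simp
      have hind : (Set.Ioc 0 c).indicator g₁ u = g₁ u :=
        Set.indicator_of_mem (Set.mem_Ioc.2 ⟨hu0, hcase⟩) g₁
      calc ENNReal.ofReal (wfun h u t) ≤ g₁ u := ENNReal.ofReal_le_ofReal h1
        _ ≤ _ := by rw [hind]; exact le_add_of_nonneg_right zero_le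
    · have h1 : wfun h u t ≤ t * u ^ (-(3:ℝ)/2) := by
        unfold wfun
        have hexp : Real.exp (-(t^2)/(8*(u+h))) ≤ 1 := by
          apply Real.exp_le_one_iff.2
          apply div_nonpos_of_nonpos_of_nonneg (neg_nonpos_of_nonneg (sq_nonneg t))
            (by positivity)
        have hinv : (u+h)⁻¹ ≤ u⁻¹ := by
          apply inv_anti₀ hu0
          linarith
        have hrw : u⁻¹ * u ^ (-(1:ℝ)/2) = u ^ (-(3:ℝ)/2) := by
          rw [← Real.rpow_neg_one u, ← Real.rpow_add hu0]
          norm_num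
        calc t * (u+h)⁻¹ * Real.exp (-(t^2)/(8*(u+h))) * u ^ (-(1:ℝ)/2)
            ≤ t * u⁻¹ * 1 * u ^ (-(1:ℝ)/2) := by
              apply mul_le_mul_of_nonneg_right _ (by positivity)
              apply mul_le_mul (mul_le_mul_of_nonneg_left hinv ht.le) hexp
                (Real.exp_pos _).le (by positivity)
          _ = t * (u⁻¹ * u ^ (-(1:ℝ)/2)) := by ring
          _ = t * u ^ (-(3:ℝ)/2) := by rw [hrw]
      have hind : (Set.Ioi c).indicator g₂ u = g₂ u :=
        Set.indicator_of_mem (Set.mem_Ioi.2 hcase) g₂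
      calc ENNReal.ofReal (wfun h u t) ≤ g₂ u := ENNReal.ofReal_le_ofReal h1
        _ ≤ _ := by rw [hind]; exact le_add_of_nonneg_left zero_le
  have step : ∫⁻ u in Set.Ioi (0:ℝ), ENNReal.ofReal (wfun h u t) ≤
      ∫⁻ u in Set.Ioi (0:ℝ), ((Set.Ioc 0 c).indicator g₁ u + (Set.Ioi c).indicator g₂ u) :=
    setLIntegral_mono ((hg₁m.indicator measurableSet_Ioc).add
      (hg₂m.indicator measurableSet_Ioi)) hpt
  refine step.trans ?_
  rw [lintegral_add_left (hg₁m.indicator measurableSet_Ioc)]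
  have hA : ∫⁻ u in Set.Ioi (0:ℝ), (Set.Ioc 0 c).indicator g₁ u ≤ ENNReal.ofReal 16 := by
    calc ∫⁻ u in Set.Ioi (0:ℝ), (Set.Ioc 0 c).indicator g₁ u
        ≤ ∫⁻ u, (Set.Ioc 0 c).indicator g₁ u := setLIntegral_le_lintegral _ _
      _ = ∫⁻ u in Set.Ioc 0 c, g₁ u := lintegral_indicator measurableSet_Ioc _
      _ ≤ ENNReal.ofReal 16 := by
          have hint : IntegrableOn (fun u : ℝ => 8 * u ^ (-(1:ℝ)/2) / t) (Set.Ioc 0 c) := by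
            have h0 : IntervalIntegrable (fun u : ℝ => u ^ (-(1:ℝ)/2)) MeasureTheory.volume 0 c :=
              intervalIntegral.intervalIntegrable_rpow' (by norm_num)
            rw [intervalIntegrable_iff_integrableOn_Ioc_of_le hc.le] at h0
            exact (h0.const_mul 8).div_const t
          have hnn : 0 ≤ᵐ[MeasureTheory.volume.restrict (Set.Ioc 0 c)]
              (fun u : ℝ => 8 * u ^ (-(1:ℝ)/2) / t) := by
            filter_upwards [MeasureTheory.ae_restrict_mem measurableSet_Ioc] with u hu
            have := hu.1
            positivity
          rw [← MeasureTheory.ofReal_integral_eq_lintegral_ofReal hint hnn]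
          apply ENNReal.ofReal_le_ofReal
          have hval : ∫ u in Set.Ioc (0:ℝ) c, u ^ (-(1:ℝ)/2) = 2 * t := by
            rw [← intervalIntegral.integral_of_le hc.le,
              integral_rpow (Or.inl (by norm_num : (-1:ℝ) < -(1:ℝ)/2))]
            rw [show (-(1:ℝ)/2 + 1) = (1:ℝ)/2 by norm_num, hsqc,
              Real.zero_rpow (by norm_num : ((1:ℝ)/2) ≠ 0)]
            field_simp
            ring
          rw [MeasureTheory.integral_div, MeasureTheory.integral_const_mul, hval]
          rw [div_le_iff₀ ht]
          linarith
  have hB : ∫⁻ u in Set.Ioi (0:ℝ), (Set.Ioi c).indicator g₂ u ≤ ENNReal.ofReal 2 := by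
    calc ∫⁻ u in Set.Ioi (0:ℝ), (Set.Ioi c).indicator g₂ u
        ≤ ∫⁻ u, (Set.Ioi c).indicator g₂ u := setLIntegral_le_lintegral _ _
      _ = ∫⁻ u in Set.Ioi c, g₂ u := lintegral_indicator measurableSet_Ioi _
      _ ≤ ENNReal.ofReal 2 := by
          have hint : IntegrableOn (fun u : ℝ => t * u ^ (-(3:ℝ)/2)) (Set.Ioi c) :=
            (integrableOn_Ioi_rpow_of_lt (by norm_num : (-(3:ℝ)/2) < -1) hc).const_mul t
          have hnn : 0 ≤ᵐ[MeasureTheory.volume.restrict (Set.Ioi c)]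
              (fun u : ℝ => t * u ^ (-(3:ℝ)/2)) := by
            filter_upwards [MeasureTheory.ae_restrict_mem measurableSet_Ioi] with u hu
            have hu0 : (0:ℝ) < u := hc.trans hu
            positivity
          rw [← MeasureTheory.ofReal_integral_eq_lintegral_ofReal hint hnn]
          apply ENNReal.ofReal_le_ofReal
          have hval : ∫ u in Set.Ioi c, u ^ (-(3:ℝ)/2) = 2 * c ^ (-(1:ℝ)/2) := by
            rw [integral_Ioi_rpow_of_lt (by norm_num : (-(3:ℝ)/2) < -1) hc]
            rw [show (-(3:ℝ)/2 + 1) = -((1:ℝ)/2) by norm_num]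
            rw [Real.rpow_neg hc.le, show (-(1:ℝ)/2) = -((1:ℝ)/2) by norm_num,
              Real.rpow_neg hc.le]
            field_simp
          have hcinv : c ^ (-(1:ℝ)/2) = t⁻¹ := by
            rw [show (-(1:ℝ)/2) = -((1:ℝ)/2) by norm_num, Real.rpow_neg hc.le, hsqc]
          rw [MeasureTheory.integral_const_mul, hval, hcinv]
          rw [mul_comm 2 t⁻¹, ← mul_assoc]
          rw [mul_inv_cancel₀ ht.ne', one_mul]
  refine le_trans (add_le_add hA hB) ?_
  rw [← ENNReal.ofReal_add (by norm_num) (by norm_num)]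
  norm_num


lemma sqrt_mul_rpow_neg {a : ℝ} (ha : 0 < a) :
    Real.sqrt a * a ^ (-(3:ℝ)/2) = a⁻¹ := by
  rw [Real.sqrt_eq_rpow, ← Real.rpow_add ha,
    show (1:ℝ)/2 + -(3:ℝ)/2 = -1 by norm_num, Real.rpow_neg_one]

lemma Ufrak_bound (d k : ℕ) (j : Fin d) (E : Set ℝ) (hEmeas : MeasurableSet E) (hE : E ⊆ Set.Ioi 0)
    {h : ℝ} (hh : 0 ≤ h) {C₁ : ℝ} (hC₁ : 0 < C₁)
    (hC₁b : ∀ a : ℝ, 0 < a → ∀ t : ℝ, 0 < t →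
      t^(k+1) * |iteratedDeriv k (fun r : ℝ => r * Real.exp (-(r^2)/(4*a))) t| ≤
        C₁ * (Real.sqrt a * t * Real.exp (-(t^2)/(8*a))))
    (z : Fin d → ℝ) {t : ℝ} (ht : 0 < t) :
    ENNReal.ofReal |Ufrak d k j E h z t| ≤
      ∫⁻ u in E, ENNReal.ofReal ((C₁ * (2 * 2 ^ ((d:ℝ)/2)) / (2 * Real.sqrt Real.pi)) *
        (wfun h u t * heatKer d (2*u) z)) := by
  have hπ : 0 < Real.sqrt Real.pi := Real.sqrt_pos.2 Real.pi_pos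
  set cd : ℝ := 2 * 2 ^ ((d:ℝ)/2) with hcd
  have hcdpos : 0 < cd := by positivity
  set c : ℝ := t ^ (k+1) / (2 * Real.sqrt Real.pi) with hc
  have hcpos : 0 < c := by positivity
  set g : ℝ → ℝ := fun u =>
    iteratedDeriv k (fun r : ℝ => r * Real.exp (-(r^2)/(4*(u+h)))) t *
      fderiv ℝ (fun w => heatKer d u w) z (Pi.single j 1) * (u + h) ^ (-(3:ℝ)/2) with hg
  have hU : Ufrak d k j E h z t = c * ∫ u in E, g u := rfl
  rw [hU]
  have habs : |c * ∫ u in E, g u| = c * |∫ u in E, g u| := by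
    rw [abs_mul, abs_of_pos hcpos]
  rw [habs, ENNReal.ofReal_mul hcpos.le]
  have hnorm : ENNReal.ofReal |∫ u in E, g u| ≤ ∫⁻ u in E, ENNReal.ofReal |g u| := by
    rw [← Real.enorm_eq_ofReal_abs]
    refine (enorm_integral_le_lintegral_enorm _).trans (le_of_eq ?_)
    congr 1
    funext u
    rw [Real.enorm_eq_ofReal_abs]
  calc ENNReal.ofReal c * ENNReal.ofReal |∫ u in E, g u|
      ≤ ENNReal.ofReal c * ∫⁻ u in E, ENNReal.ofReal |g u| :=
        mul_le_mul_right hnorm _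
    _ = ∫⁻ u in E, ENNReal.ofReal c * ENNReal.ofReal |g u| :=
        (lintegral_const_mul' _ _ ENNReal.ofReal_ne_top).symm
    _ ≤ _ := ?_
  apply lintegral_mono_ae
  filter_upwards [MeasureTheory.ae_restrict_mem hEmeas] with u hu
  · have hu0 : 0 < u := hE hu
    have ha : 0 < u + h := by linarith
    rw [← ENNReal.ofReal_mul hcpos.le]
    apply ENNReal.ofReal_le_ofReal
    have hW2pos : 0 < heatKer d (2*u) z := by
      unfold heatKer
      positivity
    have hppos : 0 < (u + h) ^ (-(3:ℝ)/2) := Real.rpow_pos_of_pos ha _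
    have hgabs : |g u| = |iteratedDeriv k (fun r : ℝ => r * Real.exp (-(r^2)/(4*(u+h)))) t| *
        |fderiv ℝ (fun w => heatKer d u w) z (Pi.single j 1)| * (u + h) ^ (-(3:ℝ)/2) := by
      rw [hg]
      rw [abs_mul, abs_mul, abs_of_pos hppos]
    rw [hgabs]
    have h1 := hC₁b (u+h) ha t ht
    have h2 := fderiv_heatKer_bound d hu0 z j
    have hmul : t^(k+1) * |iteratedDeriv k (fun r : ℝ => r * Real.exp (-(r^2)/(4*(u+h)))) t| *
          |fderiv ℝ (fun w => heatKer d u w) z (Pi.single j 1)|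
        ≤ (C₁ * (Real.sqrt (u+h) * t * Real.exp (-(t^2)/(8*(u+h))))) *
          (cd * u ^ (-(1:ℝ)/2) * heatKer d (2*u) z) := by
      apply mul_le_mul h1 h2 (abs_nonneg _) (by positivity)
    have hfinal : c * (|iteratedDeriv k (fun r : ℝ => r * Real.exp (-(r^2)/(4*(u+h)))) t| *
          |fderiv ℝ (fun w => heatKer d u w) z (Pi.single j 1)| * (u + h) ^ (-(3:ℝ)/2))
        ≤ (C₁ * cd / (2 * Real.sqrt Real.pi)) * (wfun h u t * heatKer d (2*u) z) := by
      have hlhs : c * (|iteratedDeriv k (fun r : ℝ => r * Real.exp (-(r^2)/(4*(u+h)))) t| *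
            |fderiv ℝ (fun w => heatKer d u w) z (Pi.single j 1)| * (u + h) ^ (-(3:ℝ)/2))
          = (t^(k+1) * |iteratedDeriv k (fun r : ℝ => r * Real.exp (-(r^2)/(4*(u+h)))) t| *
              |fderiv ℝ (fun w => heatKer d u w) z (Pi.single j 1)|) *
            ((u + h) ^ (-(3:ℝ)/2) / (2 * Real.sqrt Real.pi)) := by
        rw [hc]
        ring
      rw [hlhs]
      have hstep := mul_le_mul_of_nonneg_right hmul
        (le_of_lt (div_pos hppos (by positivity)) :
          (0:ℝ) ≤ (u + h) ^ (-(3:ℝ)/2) / (2 * Real.sqrt Real.pi))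
      refine hstep.trans (le_of_eq ?_)
      unfold wfun
      rw [← sqrt_mul_rpow_neg ha]
      ring
    exact hfinal

end Aux

/-- The local part of the operator with kernel `𝔘` is pointwise dominated by the heat
maximal function: there is `C > 0` (depending only on `d`, `k`, `h`, `E`) such that for every
cutoff `φ` with values in `[0,1]` vanishing outside `L₂` and every `f ∈ C_c^∞(ℝ^d)`,
`sup_{t>0} |∫ 𝔘(x-y,t) φ(x,y) f(y) dy| ≤ C sup_{v>0} (W_v * |f|)(x)`. -/

theorem statement18 (d : ℕ) (hd : 1 ≤ d) (k : ℕ) (h : ℝ) (hh : 0 ≤ h)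
    (E : Set ℝ) (hEmeas : MeasurableSet E) (hE : E ⊆ Set.Ioi 0) :
    ∃ C > 0, ∀ j : Fin d, ∀ φ : (Fin d → ℝ) × (Fin d → ℝ) → ℝ, Measurable φ →
      (∀ p, φ p ∈ Set.Icc (0:ℝ) 1) →
      (∀ p, p ∉ localRegion d 2 → φ p = 0) →
      ∀ f : (Fin d → ℝ) → ℝ, ContDiff ℝ (⊤ : ℕ∞) f → HasCompactSupport f →
      ∀ x : Fin d → ℝ, ∀ t : ℝ, 0 < t →
      ENNReal.ofReal |∫ y, Ufrak d k j E h (x - y) t * φ (x, y) * f y| ≤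
        ENNReal.ofReal C *
          ⨆ (v : ℝ) (_ : 0 < v), ENNReal.ofReal (∫ y, heatKer d v (x - y) * |f y|) := by
  obtain ⟨C₁, hC₁, hC₁b⟩ := timeDeriv_bound k
  have hπ : 0 < Real.sqrt Real.pi := Real.sqrt_pos.2 Real.pi_pos
  set K : ℝ := C₁ * (2 * 2 ^ ((d:ℝ)/2)) / (2 * Real.sqrt Real.pi) with hK
  have hKpos : 0 < K := by positivity
  refine ⟨K * 18 + 1, by positivity, ?_⟩
  intro j φ hφm hφ01 hφloc f hf hfc x t ht
  set S := ⨆ (v : ℝ) (_ : 0 < v), ENNReal.ofReal (∫ y, heatKer d v (x - y) * |f y|) with hS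
  -- continuity of y ↦ nrm2 (x - y)
  have hqcont : Continuous (fun y : Fin d → ℝ => nrm2 (x - y)) := by
    have hcoord : ∀ i, Continuous fun y : Fin d → ℝ => (x - y) i := fun i =>
      (continuous_apply i).comp (continuous_const.sub continuous_id)
    exact continuous_finset_sum _ (fun i _ => (hcoord i).pow 2)
  -- integrability of the heat convolution integrand
  have hconv : ∀ v : ℝ, Integrable (fun y => heatKer d v (x - y) * |f y|) := by
    intro v
    apply Continuous.integrable_of_hasCompactSupport
    · apply Continuous.mul
      · exact continuous_const.mul (Real.continuous_exp.comp ((hqcont.neg).div_const (2*v)))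
      · exact hf.continuous.abs
    · exact (hfc.abs).mul_left
  -- conv integral bounded by the supremum S
  have hconvS : ∀ u : ℝ, 0 < u →
      ∫⁻ y, ENNReal.ofReal (heatKer d (2*u) (x - y) * |f y|) ≤ S := by
    intro u hu
    have heq : ∫⁻ y, ENNReal.ofReal (heatKer d (2*u) (x - y) * |f y|)
        = ENNReal.ofReal (∫ y, heatKer d (2*u) (x - y) * |f y|) := by
      rw [← MeasureTheory.ofReal_integral_eq_lintegral_ofReal (hconv (2*u))]
      filter_upwards with y
      have hW : 0 < heatKer d (2*u) (x - y) := by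
        unfold heatKer
        positivity
      positivity
    rw [heq, hS]
    have h2u : 0 < 2*u := by linarith
    exact le_iSup₂ (f := fun (v:ℝ) (_ : 0 < v) =>
      ENNReal.ofReal (∫ y, heatKer d v (x - y) * |f y|)) (2*u) h2u
  -- measurability of the dominating kernel
  have hBm : Measurable (fun p : (Fin d → ℝ) × ℝ =>
      ENNReal.ofReal (K * (wfun h p.2 t * heatKer d (2*p.2) (x - p.1))) *
        ENNReal.ofReal |f p.1|) := by
    apply Measurable.fun_mul
    · apply Measurable.ennreal_ofReal
      apply Measurable.const_mul
      apply Measurable.fun_mul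
      · exact (wfun_measurable h t).comp measurable_snd
      · unfold heatKer
        apply Measurable.fun_mul
        · have : Measurable fun p : (Fin d → ℝ) × ℝ =>
              (2 * Real.pi * (2 * p.2)) ^ (-(d:ℝ)/2) := by fun_prop
          exact this
        · apply Real.measurable_exp.comp
          apply Measurable.fun_div
          · exact ((hqcont.measurable).comp measurable_fst).neg
          · fun_prop
    · exact ((hf.continuous.abs.measurable).comp measurable_fst).ennreal_ofReal
  -- pointwise bound on the integrand, for each y
  have key1 : ∀ y, ENNReal.ofReal |Ufrak d k j E h (x - y) t * φ (x, y) * f y| ≤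
      ∫⁻ u in E, ENNReal.ofReal (K * (wfun h u t * heatKer d (2*u) (x - y))) *
        ENNReal.ofReal |f y| := by
    intro y
    have hφb : |φ (x, y)| ≤ 1 := by
      rcases hφ01 (x, y) with ⟨h0, h1⟩
      rw [abs_of_nonneg h0]
      exact h1
    have h1 : |Ufrak d k j E h (x - y) t * φ (x, y) * f y| ≤
        |Ufrak d k j E h (x - y) t| * |f y| := by
      rw [abs_mul, abs_mul]
      calc |Ufrak d k j E h (x - y) t| * |φ (x, y)| * |f y|
          ≤ |Ufrak d k j E h (x - y) t| * 1 * |f y| :=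
            mul_le_mul_of_nonneg_right
              (mul_le_mul_of_nonneg_left hφb (abs_nonneg _)) (abs_nonneg _)
        _ = |Ufrak d k j E h (x - y) t| * |f y| := by ring
    calc ENNReal.ofReal |Ufrak d k j E h (x - y) t * φ (x, y) * f y|
        ≤ ENNReal.ofReal (|Ufrak d k j E h (x - y) t| * |f y|) :=
          ENNReal.ofReal_le_ofReal h1
      _ = ENNReal.ofReal |Ufrak d k j E h (x - y) t| * ENNReal.ofReal |f y| :=
          ENNReal.ofReal_mul (abs_nonneg _)
      _ ≤ (∫⁻ u in E, ENNReal.ofReal (K * (wfun h u t * heatKer d (2*u) (x - y)))) *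
          ENNReal.ofReal |f y| := by
          apply mul_le_mul_left
          exact Ufrak_bound d k j E hEmeas hE hh hC₁ hC₁b (x - y) ht
      _ = ∫⁻ u in E, ENNReal.ofReal (K * (wfun h u t * heatKer d (2*u) (x - y))) *
          ENNReal.ofReal |f y| := by
          rw [lintegral_mul_const]
          apply Measurable.ennreal_ofReal
          apply Measurable.const_mul
          apply Measurable.fun_mul
          · exact wfun_measurable h t
          · unfold heatKer
            apply Measurable.fun_mul
            · have : Measurable fun u : ℝ =>
                  (2 * Real.pi * (2 * u)) ^ (-(d:ℝ)/2) := by fun_prop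
              exact this
            · apply Real.measurable_exp.comp
              apply Measurable.fun_div
              · fun_prop
              · fun_prop
  -- main chain
  calc ENNReal.ofReal |∫ y, Ufrak d k j E h (x - y) t * φ (x, y) * f y|
      ≤ ∫⁻ y, ENNReal.ofReal |Ufrak d k j E h (x - y) t * φ (x, y) * f y| := by
        rw [← Real.enorm_eq_ofReal_abs]
        refine (enorm_integral_le_lintegral_enorm _).trans (le_of_eq ?_)
        congr 1
        funext y
        rw [Real.enorm_eq_ofReal_abs]
    _ ≤ ∫⁻ y, ∫⁻ u in E, ENNReal.ofReal (K * (wfun h u t * heatKer d (2*u) (x - y))) *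
          ENNReal.ofReal |f y| := lintegral_mono key1
    _ = ∫⁻ u in E, ∫⁻ y, ENNReal.ofReal (K * (wfun h u t * heatKer d (2*u) (x - y))) *
          ENNReal.ofReal |f y| := by
        apply lintegral_lintegral_swap
        exact hBm.aemeasurable
    _ ≤ ∫⁻ u in E, ENNReal.ofReal (K * wfun h u t) * S := by
        apply lintegral_mono_ae
        filter_upwards [MeasureTheory.ae_restrict_mem hEmeas] with u hu
        have hu0 : 0 < u := hE hu
        have hwnn : 0 ≤ wfun h u t := wfun_nonneg hu0.le hh ht.le
        have hsplit : ∀ y, ENNReal.ofReal (K * (wfun h u t * heatKer d (2*u) (x - y))) *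
            ENNReal.ofReal |f y|
            = ENNReal.ofReal (K * wfun h u t) *
              ENNReal.ofReal (heatKer d (2*u) (x - y) * |f y|) := by
          intro y
          have hWnn : 0 ≤ heatKer d (2*u) (x - y) := by unfold heatKer; positivity
          rw [show K * (wfun h u t * heatKer d (2*u) (x - y))
              = (K * wfun h u t) * heatKer d (2*u) (x - y) from by ring]
          rw [ENNReal.ofReal_mul (mul_nonneg hKpos.le hwnn), mul_assoc,
            ← ENNReal.ofReal_mul hWnn]
        calc ∫⁻ y, ENNReal.ofReal (K * (wfun h u t * heatKer d (2*u) (x - y))) *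
              ENNReal.ofReal |f y|
            = ∫⁻ y, ENNReal.ofReal (K * wfun h u t) *
              ENNReal.ofReal (heatKer d (2*u) (x - y) * |f y|) := by
              congr 1
              funext y
              exact hsplit y
          _ = ENNReal.ofReal (K * wfun h u t) *
              ∫⁻ y, ENNReal.ofReal (heatKer d (2*u) (x - y) * |f y|) :=
              lintegral_const_mul' _ _ ENNReal.ofReal_ne_top
          _ ≤ ENNReal.ofReal (K * wfun h u t) * S :=
              mul_le_mul_right (hconvS u hu0) _
    _ = (∫⁻ u in E, ENNReal.ofReal (K * wfun h u t)) * S := by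
        rw [lintegral_mul_const]
        exact ((wfun_measurable h t).const_mul K).ennreal_ofReal
    _ ≤ ENNReal.ofReal (K * 18 + 1) * S := by
        apply mul_le_mul_left
        calc ∫⁻ u in E, ENNReal.ofReal (K * wfun h u t)
            ≤ ∫⁻ u in Set.Ioi (0:ℝ), ENNReal.ofReal (K * wfun h u t) :=
              lintegral_mono_set hE
          _ = ENNReal.ofReal K * ∫⁻ u in Set.Ioi (0:ℝ), ENNReal.ofReal (wfun h u t) := by
              rw [← lintegral_const_mul' _ _ ENNReal.ofReal_ne_top]
              congr 1
              funext u
              rw [← ENNReal.ofReal_mul hKpos.le]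
          _ ≤ ENNReal.ofReal K * ENNReal.ofReal 18 :=
              mul_le_mul_right (mass_bound h hh ht) _
          _ = ENNReal.ofReal (K * 18) := (ENNReal.ofReal_mul hKpos.le).symm
          _ ≤ ENNReal.ofReal (K * 18 + 1) := ENNReal.ofReal_le_ofReal (by linarith)
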